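/- arXiv:2305.10922 — 3 statements merged into one kernel-verified Lean document; each statement's English description precedes it below -/
import Mathlib

section
/- For any two closed line segments s₁ = [a₁,b₁] and s₂ = [a₂,b₂] in ℝ², the Hausdorff distance d_H(s₁,s₂) equals the maximum of the four values δ(a₁,s₂), δ(b₁,s₂), δ(a₂,s₁), δ(b₂,s₁), where δ(p,s) denotes the minimum Euclidean distance from the point p to the segment s. -/
noncomputable abbrev E2 : Type := EuclideanSpace ℝ (Fin 2)

/-! The distance to a convex set is a convex function, so on a segment it is maximal at an
endpoint. Hence every point of one segment lies within the largest endpoint distance of the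
other segment, which bounds the Hausdorff distance from above; the reverse bound holds because
the endpoints belong to the segments. -/

open Metric Set

section Convex

variable {E : Type*} [SeminormedAddCommGroup E] [NormedSpace ℝ E]

theorem dist_convexComb_le (a b p q : E) {u v : ℝ} (hu : 0 ≤ u) (hv : 0 ≤ v) :
    dist (u • a + v • b) (u • p + v • q) ≤ u * dist a p + v * dist b q :=
  calc dist (u • a + v • b) (u • p + v • q)
      ≤ dist (u • a) (u • p) + dist (v • b) (v • q) := dist_add_add_le _ _ _ _
    _ = u * dist a p + v * dist b q := by
      rw [dist_smul₀, dist_smul₀, Real.norm_of_nonneg hu, Real.norm_of_nonneg hv]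

theorem Convex.convexOn_infDist {t : Set E} (ht : Convex ℝ t) :
    ConvexOn ℝ univ fun x ↦ infDist x t := by
  refine ⟨convex_univ, fun a _ b _ u v hu hv huv ↦ ?_⟩
  rcases t.eq_empty_or_nonempty with rfl | hne
  · simp
  refine le_of_forall_pos_le_add fun ε hε ↦ ?_
  obtain ⟨p, hp, hap⟩ := (infDist_lt_iff hne).1 (lt_add_of_pos_right (infDist a t) hε)
  obtain ⟨q, hq, hbq⟩ := (infDist_lt_iff hne).1 (lt_add_of_pos_right (infDist b t) hε)
  calc infDist (u • a + v • b) t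
      ≤ dist (u • a + v • b) (u • p + v • q) :=
        infDist_le_dist_of_mem (ht hp hq hu hv huv)
    _ ≤ u * dist a p + v * dist b q := dist_convexComb_le a b p q hu hv
    _ ≤ u * (infDist a t + ε) + v * (infDist b t + ε) := by gcongr
    _ = u • infDist a t + v • infDist b t + ε := by
      rw [smul_eq_mul, smul_eq_mul]; linear_combination ε * huv

theorem infDist_le_max_of_mem_segment {a b x : E} {t : Set E} (ht : Convex ℝ t)
    (hx : x ∈ segment ℝ a b) : infDist x t ≤ max (infDist a t) (infDist b t) :=
  ht.convexOn_infDist.le_max_of_mem_segment (mem_univ a) (mem_univ b) hx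

theorem hausdorffDist_segment_le_max (a₁ b₁ a₂ b₂ : E) :
    hausdorffDist (segment ℝ a₁ b₁) (segment ℝ a₂ b₂) ≤
      max (max (infDist a₁ (segment ℝ a₂ b₂)) (infDist b₁ (segment ℝ a₂ b₂)))
          (max (infDist a₂ (segment ℝ a₁ b₁)) (infDist b₂ (segment ℝ a₁ b₁))) :=
  hausdorffDist_le_of_infDist (le_max_of_le_left (le_max_of_le_left infDist_nonneg))
    (fun _ hx ↦
      (infDist_le_max_of_mem_segment (convex_segment a₂ b₂) hx).trans (le_max_left _ _))
    (fun _ hx ↦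
      (infDist_le_max_of_mem_segment (convex_segment a₁ b₁) hx).trans (le_max_right _ _))

theorem isCompact_segment (a b : E) : IsCompact (segment ℝ a b) := by
  rw [← convexHull_pair (𝕜 := ℝ)]
  exact (toFinite _).isCompact_convexHull ℝ

theorem infDist_le_hausdorffDist_segment {a b c d x : E} (hx : x ∈ segment ℝ a b) :
    infDist x (segment ℝ c d) ≤ hausdorffDist (segment ℝ a b) (segment ℝ c d) :=
  infDist_le_hausdorffDist_of_mem hx <|
    hausdorffEDist_ne_top_of_nonempty_of_bounded ⟨x, hx⟩ ⟨c, left_mem_segment ℝ c d⟩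
      (isCompact_segment a b).isBounded (isCompact_segment c d).isBounded

end Convex

/-- For segments s₁ = [a₁,b₁], s₂ = [a₂,b₂] in ℝ², the Hausdorff distance equals the
maximum of the four endpoint-to-segment distances. -/
theorem hausdorff_dist_segments_eq_max (a₁ b₁ a₂ b₂ : E2) :
    Metric.hausdorffDist (segment ℝ a₁ b₁) (segment ℝ a₂ b₂) =
      max (max (Metric.infDist a₁ (segment ℝ a₂ b₂)) (Metric.infDist b₁ (segment ℝ a₂ b₂)))
          (max (Metric.infDist a₂ (segment ℝ a₁ b₁)) (Metric.infDist b₂ (segment ℝ a₁ b₁))) := by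
  refine (hausdorffDist_segment_le_max a₁ b₁ a₂ b₂).antisymm
    (max_le (max_le ?_ ?_) (hausdorffDist_comm (s := segment ℝ a₁ b₁) ▸ max_le ?_ ?_))
  · exact infDist_le_hausdorffDist_segment (left_mem_segment ℝ a₁ b₁)
  · exact infDist_le_hausdorffDist_segment (right_mem_segment ℝ a₁ b₁)
  · exact infDist_le_hausdorffDist_segment (left_mem_segment ℝ a₂ b₂)
  · exact infDist_le_hausdorffDist_segment (right_mem_segment ℝ a₂ b₂)
end

section
/- Let s₁ be the segment from (−1,0) to (1,0) and s₂ the segment from (0,−1) to (0,1). Any segment s minimizing d_H(s,s₁)² + d_H(s,s₂)² must contain the origin. -/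
noncomputable def crossCost (a b : E2) : ℝ :=
  Metric.hausdorffDist (segment ℝ a b) (segment ℝ (!₂[(-1 : ℝ), 0] : E2) (!₂[(1 : ℝ), 0] : E2)) ^ 2 +
    Metric.hausdorffDist (segment ℝ a b) (segment ℝ (!₂[(0 : ℝ), -1] : E2) (!₂[(0 : ℝ), 1] : E2)) ^ 2

/-!
A Fréchet mean costs at most as much as `s₁` itself, i.e. `d_H(s₁, s₂)² ≤ 1`, so its Hausdorff
distances `u, v` to `s₁, s₂` are at most `1`. A segment within distance `1` of both `(±1, 0)`
has points on both sides of the vertical axis, so by connectedness it meets that axis, and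
likewise the horizontal one. If neither crossing point is the origin, the segment lies on a line
with intercepts `x, y ≠ 0`; the distances from `(±1, 0)` and `(0, ±1)` to this line give
`u² + v² ≥ (x² + y² + 2x²y²) / (x² + y²) > 1`.
-/

open Metric
open scoped RealInnerProductSpace

theorem isCompact_segment_s6 {E : Type*} [AddCommGroup E] [Module ℝ E] [TopologicalSpace E]
    [IsTopologicalAddGroup E] [ContinuousSMul ℝ E] (a b : E) : IsCompact (segment ℝ a b) :=
  convexHull_pair (𝕜 := ℝ) a b ▸ (Set.toFinite {a, b}).isCompact_convexHull ℝ

theorem Metric.hausdorffDist_le_of_subset_closedBall {X : Type*} [PseudoMetricSpace X]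
    {s t : Set X} {x : X} {r : ℝ} (hr : 0 ≤ r) (hxs : x ∈ s) (hxt : x ∈ t)
    (hs : s ⊆ closedBall x r) (ht : t ⊆ closedBall x r) : hausdorffDist s t ≤ r :=
  hausdorffDist_le_of_mem_dist hr (fun _ hy => ⟨x, hxt, hs hy⟩)
    (fun _ hy => ⟨x, hxs, ht hy⟩)

theorem Metric.exists_mem_dist_le_hausdorffDist {X : Type*} [PseudoMetricSpace X]
    {s t : Set X} (hs : IsCompact s) (hs₀ : s.Nonempty) (ht : Bornology.IsBounded t)
    {w : X} (hw : w ∈ t) : ∃ p ∈ s, dist w p ≤ hausdorffDist s t := by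
  obtain ⟨p, hp, hdist⟩ := hs.exists_infDist_eq_dist hs₀ w
  refine ⟨p, hp, hdist ▸ ?_⟩
  rw [hausdorffDist_comm]
  exact infDist_le_hausdorffDist_of_mem hw
    (hausdorffEDist_ne_top_of_nonempty_of_bounded ⟨w, hw⟩ hs₀ ht hs.isBounded)

theorem LinearMap.eq_of_mem_segment_of_eq {E : Type*} [AddCommGroup E] [Module ℝ E]
    (f : E →ₗ[ℝ] ℝ) {a b z₁ z₂ p : E} {c : ℝ} (h₁ : z₁ ∈ segment ℝ a b)
    (h₂ : z₂ ∈ segment ℝ a b) (hne : z₁ ≠ z₂) (hf₁ : f z₁ = c) (hf₂ : f z₂ = c)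
    (hp : p ∈ segment ℝ a b) : f p = c := by
  rw [segment_eq_image'] at h₁ h₂ hp
  obtain ⟨t₁, -, rfl⟩ := h₁
  obtain ⟨t₂, -, rfl⟩ := h₂
  obtain ⟨t, -, rfl⟩ := hp
  simp only [map_add, map_smul, map_sub, smul_eq_mul] at hf₁ hf₂ ⊢
  have ht : t₁ ≠ t₂ := fun h => hne (h ▸ rfl)
  have hab : f b - f a = 0 := by
    have h : (t₁ - t₂) * (f b - f a) = 0 := by linarith
    exact (mul_eq_zero.mp h).resolve_left (sub_ne_zero.mpr ht)
  rw [hab] at hf₁ ⊢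
  linarith

theorem zero_mem_segment_neg_self {E : Type*} [AddCommGroup E] [Module ℝ E] (e : E) :
    (0 : E) ∈ segment ℝ (-e) e :=
  midpoint_neg_self (R := ℝ) e ▸ midpoint_mem_segment (-e) e

theorem segment_neg_self_subset_closedBall {E : Type*} [SeminormedAddCommGroup E]
    [NormedSpace ℝ E] (e : E) : segment ℝ (-e) e ⊆ closedBall 0 ‖e‖ :=
  (convex_closedBall 0 ‖e‖).segment_subset (by simp) (by simp)

theorem hausdorffDist_segment_neg_self_le {E : Type*} [SeminormedAddCommGroup E]
    [NormedSpace ℝ E] (e f : E) :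
    hausdorffDist (segment ℝ (-e) e) (segment ℝ (-f) f) ≤ max ‖e‖ ‖f‖ :=
  hausdorffDist_le_of_subset_closedBall (by positivity) (zero_mem_segment_neg_self e)
    (zero_mem_segment_neg_self f)
    ((segment_neg_self_subset_closedBall e).trans (closedBall_subset_closedBall (le_max_left ..)))
    ((segment_neg_self_subset_closedBall f).trans (closedBall_subset_closedBall (le_max_right ..)))

/-- `x, y` are the intercepts of the line `y p₀ + x p₁ = x y` carrying the segment and `N` the
norm of its normal `(y, x)`; the hypotheses say that `(∓1, 0)` and `(0, ∓1)` lie within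
distance `u`, resp. `v`, of that line. -/
theorem one_lt_sq_add_sq_of_line_bounds {x y N u v : ℝ} (hx : x ≠ 0) (hy : y ≠ 0)
    (hN : N ^ 2 = x ^ 2 + y ^ 2) (hu₁ : |-y - x * y| ≤ N * u) (hu₂ : |y - x * y| ≤ N * u)
    (hv₁ : |-x - x * y| ≤ N * v) (hv₂ : |x - x * y| ≤ N * v) : 1 < u ^ 2 + v ^ 2 := by
  have sq_le {a b : ℝ} (h : |a| ≤ b) : a ^ 2 ≤ b ^ 2 :=
    sq_le_sq' (abs_le.mp h).1 (abs_le.mp h).2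
  have hxy : 0 < x ^ 2 * y ^ 2 := by positivity
  by_contra! hle
  nlinarith [sq_le hu₁, sq_le hu₂, sq_le hv₁, sq_le hv₂,
    mul_le_mul_of_nonneg_left hle (sq_nonneg N)]

section InnerProductSpace

variable {F : Type*} [NormedAddCommGroup F] [InnerProductSpace ℝ F]

theorem exists_mem_abs_inner_sub_le_hausdorffDist {s t : Set F} (hs : IsCompact s)
    (hs₀ : s.Nonempty) (ht : Bornology.IsBounded t) (n : F) {w : F} (hw : w ∈ t) :
    ∃ p ∈ s, |⟪n, w⟫ - ⟪n, p⟫| ≤ ‖n‖ * hausdorffDist s t := by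
  obtain ⟨p, hp, hdist⟩ := exists_mem_dist_le_hausdorffDist hs hs₀ ht hw
  refine ⟨p, hp, ?_⟩
  calc |⟪n, w⟫ - ⟪n, p⟫| = |⟪n, w - p⟫| := by rw [inner_sub_right]
    _ ≤ ‖n‖ * dist w p := dist_eq_norm w p ▸ abs_real_inner_le_norm n (w - p)
    _ ≤ ‖n‖ * hausdorffDist s t := by gcongr

theorem abs_inner_sub_le_mul_hausdorffDist {s t : Set F} (hs : IsCompact s) (hs₀ : s.Nonempty)
    (ht : Bornology.IsBounded t) {n : F} {c : ℝ} (hline : ∀ p ∈ s, ⟪n, p⟫ = c) {w : F}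
    (hw : w ∈ t) : |⟪n, w⟫ - c| ≤ ‖n‖ * hausdorffDist s t := by
  obtain ⟨p, hp, hle⟩ := exists_mem_abs_inner_sub_le_hausdorffDist hs hs₀ ht n hw
  rwa [hline p hp] at hle

theorem Convex.exists_inner_eq_zero_of_hausdorffDist_le_one {s t : Set F} (hconv : Convex ℝ s)
    (hs : IsCompact s) (hs₀ : s.Nonempty) (ht : Bornology.IsBounded t) {e : F} (he : ‖e‖ = 1)
    (hneg : -e ∈ t) (hpos : e ∈ t) (hdist : hausdorffDist s t ≤ 1) :
    ∃ z ∈ s, ⟪e, z⟫ = 0 := by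
  have hee : ⟪e, e⟫ = 1 := by rw [real_inner_self_eq_norm_sq, he, one_pow]
  obtain ⟨p, hp, hple⟩ := exists_mem_abs_inner_sub_le_hausdorffDist hs hs₀ ht e hpos
  obtain ⟨q, hq, hqle⟩ := exists_mem_abs_inner_sub_le_hausdorffDist hs hs₀ ht e hneg
  rw [he, one_mul, hee] at hple
  rw [he, one_mul, inner_neg_right, hee] at hqle
  have hp0 : 0 ≤ ⟪e, p⟫ := by linarith [(abs_le.mp (hple.trans hdist)).2]
  have hq0 : ⟪e, q⟫ ≤ 0 := by linarith [(abs_le.mp (hqle.trans hdist)).1]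
  obtain ⟨z, hz, hz0⟩ := hconv.isPreconnected.intermediate_value hq hp
    (continuous_const.inner continuous_id).continuousOn ⟨hq0, hp0⟩
  exact ⟨z, hz, hz0⟩

end InnerProductSpace

namespace E2

theorem eq_zero_of_coords {p : E2} (h₀ : p 0 = 0) (h₁ : p 1 = 0) : p = 0 := by
  ext i; fin_cases i <;> assumption

end E2

local notation "e₀" => (EuclideanSpace.single 0 1 : E2)
local notation "e₁" => (EuclideanSpace.single 1 1 : E2)

theorem crossCost_eq (a b : E2) :
    crossCost a b = hausdorffDist (segment ℝ a b) (segment ℝ (-e₀) e₀) ^ 2 +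
      hausdorffDist (segment ℝ a b) (segment ℝ (-e₁) e₁) ^ 2 := by
  have h₀ : (!₂[(-1 : ℝ), 0] : E2) = -e₀ := by ext i; fin_cases i <;> simp
  have h₀' : (!₂[(1 : ℝ), 0] : E2) = e₀ := by ext i; fin_cases i <;> simp
  have h₁ : (!₂[(0 : ℝ), -1] : E2) = -e₁ := by ext i; fin_cases i <;> simp
  have h₁' : (!₂[(0 : ℝ), 1] : E2) = e₁ := by ext i; fin_cases i <;> simp
  rw [crossCost, h₀, h₀', h₁, h₁']

theorem crossCost_neg_single_single_le_one : crossCost (-e₀) e₀ ≤ 1 := by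
  rw [crossCost_eq, hausdorffDist_self_zero, zero_pow two_ne_zero, zero_add]
  exact pow_le_one₀ hausdorffDist_nonneg
    (by simpa using hausdorffDist_segment_neg_self_le e₀ e₁)

theorem one_lt_crossCost_of_mem_axes {a b z₁ z₂ : E2} (hz₁ : z₁ ∈ segment ℝ a b)
    (hz₂ : z₂ ∈ segment ℝ a b) (hz₁0 : z₁ 0 = 0) (hz₂1 : z₂ 1 = 0) (hy : z₁ 1 ≠ 0)
    (hx : z₂ 0 ≠ 0) : 1 < crossCost a b := by
  set x := z₂ 0
  set y := z₁ 1
  set n : E2 := y • e₀ + x • e₁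
  have hn (p : E2) : ⟪n, p⟫ = y * p 0 + x * p 1 := by
    simp [n, inner_add_left, inner_smul_left, EuclideanSpace.inner_single_left]
  have hline (p : E2) (hp : p ∈ segment ℝ a b) : ⟪n, p⟫ = x * y := by
    refine (innerₛₗ ℝ n).eq_of_mem_segment_of_eq hz₁ hz₂ (fun h => hx (by subst h; exact hz₁0))
      ?_ ?_ hp
    · rw [innerₛₗ_apply_apply, hn, hz₁0]; ring
    · rw [innerₛₗ_apply_apply, hn, hz₂1]; ring
  have hN : ‖n‖ ^ 2 = x ^ 2 + y ^ 2 := by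
    rw [← real_inner_self_eq_norm_sq, hn]
    simp [n, sq, add_comm]
  have bound (e w : E2) (hw : w ∈ segment ℝ (-e) e) :=
    abs_inner_sub_le_mul_hausdorffDist (isCompact_segment_s6 a b) ⟨a, left_mem_segment ℝ a b⟩
      (isCompact_segment_s6 _ _).isBounded hline hw
  rw [crossCost_eq]
  apply one_lt_sq_add_sq_of_line_bounds hx hy hN
  · simpa [hn] using bound e₀ _ (left_mem_segment ..)
  · simpa [hn] using bound e₀ _ (right_mem_segment ..)
  · simpa [hn] using bound e₁ _ (left_mem_segment ..)
  · simpa [hn] using bound e₁ _ (right_mem_segment ..)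

theorem exists_mem_segment_apply_eq_zero {a b : E2} (i : Fin 2)
    (h : hausdorffDist (segment ℝ a b)
      (segment ℝ (-EuclideanSpace.single i 1) (EuclideanSpace.single i 1)) ≤ 1) :
    ∃ z ∈ segment ℝ a b, z i = 0 := by
  obtain ⟨z, hz, hz0⟩ := (convex_segment a b).exists_inner_eq_zero_of_hausdorffDist_le_one
    (isCompact_segment_s6 a b) ⟨a, left_mem_segment ℝ a b⟩ (isCompact_segment_s6 _ _).isBounded
    (by simp) (left_mem_segment ..) (right_mem_segment ..) h
  exact ⟨z, hz, by simpa [EuclideanSpace.inner_single_left] using hz0⟩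

theorem zero_mem_segment_of_crossCost_le_one {a b : E2} (h : crossCost a b ≤ 1) :
    (0 : E2) ∈ segment ℝ a b := by
  set s := segment ℝ a b
  obtain ⟨z₁, hz₁, hz₁0⟩ := exists_mem_segment_apply_eq_zero 0 <| by
    nlinarith [crossCost_eq a b, hausdorffDist_nonneg (s := s) (t := segment ℝ (-e₀) e₀)]
  obtain ⟨z₂, hz₂, hz₂1⟩ := exists_mem_segment_apply_eq_zero 1 <| by
    nlinarith [crossCost_eq a b, hausdorffDist_nonneg (s := s) (t := segment ℝ (-e₁) e₁)]
  by_cases h₁ : z₁ 1 = 0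
  · exact E2.eq_zero_of_coords hz₁0 h₁ ▸ hz₁
  by_cases h₂ : z₂ 0 = 0
  · exact E2.eq_zero_of_coords h₂ hz₂1 ▸ hz₂
  exact absurd h (one_lt_crossCost_of_mem_axes hz₁ hz₂ hz₁0 hz₂1 h₁ h₂).not_ge

/-- Any Fréchet mean of the two perpendicular unit-radius segments must contain the origin. -/
theorem frechet_mean_contains_origin (a b : E2)
    (hmin : ∀ a' b' : E2, crossCost a b ≤ crossCost a' b') :
    (0 : E2) ∈ segment ℝ a b :=
  zero_mem_segment_of_crossCost_le_one ((hmin _ _).trans crossCost_neg_single_single_le_one)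
end

section
/- Let (M,d) be a metric space, S a finite set in M, k ≥ 1, and let opt_k(S) = min over k-tuples (c₁,…,c_k) ∈ M^k of Σ_{s∈S} min_i d(s,c_i)². Suppose c'₁,…,c'_{k'} satisfy Σ_{s∈S} min_j d(s,c'_j)² ≤ α·opt_k(S) with α ≥ 1. Fix s ∈ S and let i be such that c'_i is a closest center to s, and let S'_i ⊆ S be the cluster of points assigned to c'_i. Then for every k-tuple (c₁,…,c_k), min_j d(s,c_j)² / Σ_{s'∈S} min_j d(s',c_j)² ≤ 32α/|S'_i| + 16α·d(s,c'_i)²/Σ_{s'∈S'_i} d(s',c'_i)², provided Σ_{s'∈S'_i} d(s',c'_i)² > 0. -/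
/-- Sensitivity bound (Lemma 4.2): given a bicriteria α-approximation with centers
c'₁,…,c'_{k'}, the sensitivity of each point s is bounded by
32α/|S'_i| + 16α·d(s,c'_i)²/cost_{S'_i}(c'_i). -/
theorem sensitivity_bound {M : Type*} [MetricSpace M]
    (S : Finset M) (k k' : ℕ) (hk : 1 ≤ k)
    (c' : Fin k' → M) (α : ℝ) (hα : 1 ≤ α)
    (hbi : ∑ s ∈ S, (⨅ j, dist s (c' j) ^ 2) ≤
      α * ⨅ c : Fin k → M, ∑ s ∈ S, ⨅ i, dist s (c i) ^ 2)
    (s : M) (hs : s ∈ S) (i : Fin k')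
    (hi : ∀ j, dist s (c' i) ≤ dist s (c' j))
    (S' : Finset M) (hS'sub : S' ⊆ S) (hsS' : s ∈ S')
    (hassign : ∀ t ∈ S', (⨅ j, dist t (c' j) ^ 2) = dist t (c' i) ^ 2)
    (hpos : 0 < ∑ s' ∈ S', dist s' (c' i) ^ 2) :
    ∀ c : Fin k → M, 0 < (∑ s' ∈ S, ⨅ j, dist s' (c j) ^ 2) →
      (⨅ j, dist s (c j) ^ 2) / (∑ s' ∈ S, ⨅ j, dist s' (c j) ^ 2) ≤
        32 * α / S'.card + 16 * α * dist s (c' i) ^ 2 / ∑ s' ∈ S', dist s' (c' i) ^ 2 := by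
  intro c hC
  haveI hk0 : Nonempty (Fin k) := ⟨⟨0, hk⟩⟩
  haveI hk'0 : Nonempty (Fin k') := ⟨i⟩
  set a := dist s (c' i) with ha
  set B := ∑ s' ∈ S', dist s' (c' i) ^ 2 with hBdef
  set C := ∑ s' ∈ S, ⨅ j, dist s' (c j) ^ 2 with hCdef
  set X := ⨅ j, dist s (c j) ^ 2 with hXdef
  have hinf_nonneg : ∀ t : M, 0 ≤ ⨅ j, dist t (c j) ^ 2 :=
    fun t => le_ciInf fun j => sq_nonneg _
  have hX0 : 0 ≤ X := hinf_nonneg s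
  have hn : 0 < (S'.card : ℝ) := by
    exact_mod_cast Finset.card_pos.mpr ⟨s, hsS'⟩
  -- pointwise bound
  have hpoint : ∀ t ∈ S',
      X ≤ 2 * (⨅ j, dist t (c j) ^ 2) + 4 * a ^ 2 + 4 * dist t (c' i) ^ 2 := by
    intro t ht
    obtain ⟨j0, hj0⟩ := exists_eq_ciInf_of_finite (f := fun j => dist t (c j) ^ 2)
    have h1 : X ≤ dist s (c j0) ^ 2 := ciInf_le (Finite.bddBelow_range _) j0
    have h2 : dist s (c j0) ≤ a + dist t (c' i) + dist t (c j0) := by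
      calc dist s (c j0) ≤ dist s t + dist t (c j0) := dist_triangle _ _ _
        _ ≤ (dist s (c' i) + dist (c' i) t) + dist t (c j0) := by
            gcongr
            exact dist_triangle _ _ _
        _ = a + dist t (c' i) + dist t (c j0) := by rw [dist_comm (c' i) t]
    have h3 : dist t (c j0) ^ 2 = ⨅ j, dist t (c j) ^ 2 := hj0
    nlinarith [sq_nonneg (a + dist t (c' i) - dist t (c j0)),
      sq_nonneg (a - dist t (c' i)), dist_nonneg (x := s) (y := c j0),
      dist_nonneg (x := t) (y := c j0), dist_nonneg (x := t) (y := c' i),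
      dist_nonneg (x := s) (y := c' i)]
  have hsum : (S'.card : ℝ) * X ≤ 2 * C + 4 * (S'.card : ℝ) * a ^ 2 + 4 * B := by
    have h := Finset.sum_le_sum hpoint
    rw [Finset.sum_const, nsmul_eq_mul] at h
    have hsub : ∑ t ∈ S', (⨅ j, dist t (c j) ^ 2) ≤ C :=
      Finset.sum_le_sum_of_subset_of_nonneg hS'sub (fun t _ _ => hinf_nonneg t)
    have hexp : ∑ t ∈ S', (2 * (⨅ j, dist t (c j) ^ 2) + 4 * a ^ 2 + 4 * dist t (c' i) ^ 2)
        = 2 * (∑ t ∈ S', ⨅ j, dist t (c j) ^ 2) + (S'.card : ℝ) * (4 * a ^ 2) + 4 * B := by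
      rw [Finset.sum_add_distrib, Finset.sum_add_distrib, Finset.sum_const,
        ← Finset.mul_sum, ← Finset.mul_sum, nsmul_eq_mul]
    rw [hexp] at h
    nlinarith [h, hsub]
  have hBC : B ≤ α * C := by
    have e1 : B = ∑ t ∈ S', ⨅ j, dist t (c' j) ^ 2 :=
      (Finset.sum_congr rfl fun t ht => hassign t ht).symm
    have e2 : ∑ t ∈ S', (⨅ j, dist t (c' j) ^ 2) ≤ ∑ t ∈ S, ⨅ j, dist t (c' j) ^ 2 :=
      Finset.sum_le_sum_of_subset_of_nonneg hS'sub
        (fun t _ _ => le_ciInf fun j => sq_nonneg _)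
    have e3 : (⨅ cc : Fin k → M, ∑ s' ∈ S, ⨅ j, dist s' (cc j) ^ 2) ≤ C := by
      refine ciInf_le ⟨0, ?_⟩ c
      rintro x ⟨cc, rfl⟩
      exact Finset.sum_nonneg fun t _ => le_ciInf fun j => sq_nonneg _
    calc B = ∑ t ∈ S', ⨅ j, dist t (c' j) ^ 2 := e1
      _ ≤ ∑ t ∈ S, ⨅ j, dist t (c' j) ^ 2 := e2
      _ ≤ α * ⨅ cc : Fin k → M, ∑ s' ∈ S, ⨅ j, dist s' (cc j) ^ 2 := hbi
      _ ≤ α * C := mul_le_mul_of_nonneg_left e3 (by linarith)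
  rw [div_add_div _ _ (ne_of_gt hn) (ne_of_gt hpos), div_le_div_iff₀ hC (by positivity)]
  nlinarith [mul_le_mul_of_nonneg_right hsum (le_of_lt hpos),
    mul_le_mul_of_nonneg_right hBC (le_of_lt hpos),
    mul_le_mul_of_nonneg_right hBC (mul_nonneg hn.le (sq_nonneg a)),
    mul_nonneg (sub_nonneg.2 hα) (mul_pos hC hpos).le,
    mul_nonneg (mul_nonneg (by linarith : (0:ℝ) ≤ α) hpos.le) hC.le,
    mul_nonneg (mul_nonneg (mul_nonneg (by linarith : (0:ℝ) ≤ α) hn.le) (sq_nonneg a)) hC.le]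
end
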